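/- arXiv:1112.4237 — 2 statements merged into one kernel-verified Lean document; each statement's English description precedes it below -/
import Mathlib

section
/- Let M : ℍ × 𝕃 → 𝕆 be a deterministic program with high-security input set ℍ and low-security input set 𝕃. Then GE[U](M) = |ℍ|/2 − (1/(2·|ℍ|·|𝕃|))·Σ_{o,ℓ} |ℍ_{o,ℓ}|², where the sum is over outputs o and low inputs ℓ, and ℍ_{o,ℓ} = {h ∈ ℍ | M(h,ℓ) = o}. -/
/-!
Under the uniform distribution, every conditional distribution of `H` that occurs is uniform on
its support, of size `k` say, and its guessing entropy is `(k + 1) / 2`: sorting lists the support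
first. Weighted by the probability `k / (|ℍ| |𝕃|)` of the conditioning event this contributes
`k (k + 1) / (2 |ℍ| |𝕃|)`. The linear parts cancel because, for each `ℓ`, the sets `ℍ_{o,ℓ}`
partition `ℍ`.
-/

/-- Guessing entropy of a (sub)distribution `p` on a finite type `X`:
`𝓖(p) = Σ_{1≤i≤m} i · p(x_i)` with `x_1, …, x_m` sorted so that
`p(x_i) ≥ p(x_j)` whenever `i ≤ j`. -/
noncomputable def guess {X : Type*} [Fintype X] (p : X → ℝ) : ℝ :=
  ∑ i : Fin (Fintype.card X), ((i : ℕ) + 1 : ℝ) *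
    p ((Fintype.equivFin X).symm
      (Tuple.sort (fun j => -p ((Fintype.equivFin X).symm j)) i))

/-- The uniform distribution on a finite type. -/
noncomputable def unif (X : Type*) [Fintype X] : X → ℝ :=
  fun _ => (Fintype.card X : ℝ)⁻¹

variable {Hi Li Oi : Type*}

/-- Marginal probability `μ(L = ℓ)`. -/
noncomputable def pL [Fintype Hi] (μ : Hi × Li → ℝ) (ℓ : Li) : ℝ := ∑ h, μ (h, ℓ)

/-- Joint probability `μ(O = o, L = ℓ)` where `O = M(H,L)`. -/
noncomputable def pOL [Fintype Hi] [DecidableEq Oi] (M : Hi × Li → Oi) (μ : Hi × Li → ℝ)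
    (o : Oi) (ℓ : Li) : ℝ := ∑ h, if M (h, ℓ) = o then μ (h, ℓ) else 0

/-- Conditional guessing entropy `𝓖[μ](H|L)`. -/
noncomputable def condGuessHL [Fintype Hi] [Fintype Li] (μ : Hi × Li → ℝ) : ℝ :=
  ∑ ℓ : Li, pL μ ℓ * guess (fun h : Hi => μ (h, ℓ) / pL μ ℓ)

/-- Conditional guessing entropy `𝓖[μ](H|O,L)` where `O = M(H,L)`. -/
noncomputable def condGuessHOL [Fintype Hi] [Fintype Li] [Fintype Oi] [DecidableEq Oi]
    (M : Hi × Li → Oi) (μ : Hi × Li → ℝ) : ℝ :=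
  ∑ ℓ : Li, ∑ o : Oi, pOL M μ o ℓ *
    guess (fun h : Hi => (if M (h, ℓ) = o then μ (h, ℓ) else 0) / pOL M μ o ℓ)

/-- Guessing-entropy-based QIF `GE[μ](M) = 𝓖[μ](H|L) − 𝓖[μ](H|O,L)`. -/
noncomputable def GE [Fintype Hi] [Fintype Li] [Fintype Oi] [DecidableEq Oi]
    (M : Hi × Li → Oi) (μ : Hi × Li → ℝ) : ℝ :=
  condGuessHL μ - condGuessHOL M μ

open Finset

lemma sum_range_natCast_add_one (k : ℕ) : ∑ i ∈ range k, ((i : ℝ) + 1) = k * (k + 1) / 2 := by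
  induction k with
  | zero => simp
  | succ k ih => rw [sum_range_succ, ih]; push_cast; ring

lemma Fin.mem_iff_lt_card_of_isLowerSet {n : ℕ} {T : Finset (Fin n)}
    (hT : IsLowerSet (T : Set (Fin n))) (i : Fin n) : i ∈ T ↔ (i : ℕ) < #T := by
  constructor
  · intro hi
    have : Iic i ⊆ T := fun j hj => hT (mem_Iic.mp hj) hi
    simpa using card_le_card this
  · intro hi
    by_contra hiT
    have : T ⊆ Iio i := fun j hj => mem_Iio.mpr (not_le.mp fun hij => hiT (hT hij hj))
    have := card_le_card this
    rw [Fin.card_Iio] at this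
    omega

lemma Fin.sum_mul_ite_lt {n k : ℕ} (hk : k ≤ n) (f : ℕ → ℝ) (c : ℝ) :
    ∑ i : Fin n, f i * (if (i : ℕ) < k then c else 0) = c * ∑ i ∈ range k, f i := by
  rw [Fin.sum_univ_eq_sum_range (fun i => f i * if i < k then c else 0), mul_sum,
    ← sum_range_add_sum_Ico _ hk, sum_eq_zero (s := Ico k n), add_zero]
  · exact sum_congr rfl fun i hi => by rw [if_pos (mem_range.mp hi), mul_comm]
  · intro i hi
    rw [if_neg (mem_Ico.mp hi).1.not_gt, mul_zero]

lemma guess_indicator {X : Type*} [Fintype X] (P : X → Prop) [DecidablePred P] {c : ℝ}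
    (hc : 0 ≤ c) :
    guess (fun x => if P x then c else 0) = c * #{x | P x} * (#{x | P x} + 1) / 2 := by
  rcases hc.eq_or_lt with rfl | hc
  · simp [guess]
  set p : X → ℝ := fun x => if P x then c else 0
  set e := (Fintype.equivFin X).symm
  set σ := Tuple.sort fun j => -p (e j)
  set T : Finset (Fin (Fintype.card X)) := {i | P (e (σ i))}
  have hanti : Antitone fun i => p (e (σ i)) := fun i j hij => by
    simpa using Tuple.monotone_sort (fun j => -p (e j)) hij
  have hT : IsLowerSet (T : Set (Fin (Fintype.card X))) := by
    intro i j hji hi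
    by_contra hj
    have := hanti hji
    simp_all [p, T]
    linarith
  have hcard : #T = #{x | P x} := card_equiv (σ.trans e) (by simp [T])
  calc guess p
        = ∑ i : Fin (Fintype.card X), ((i : ℕ) + 1 : ℝ) * if (i : ℕ) < #T then c else 0 := by
        refine sum_congr rfl fun i _ => ?_
        simp only [← Fin.mem_iff_lt_card_of_isLowerSet hT, T, mem_filter_univ]
        rfl
    _ = c * #{x | P x} * (#{x | P x} + 1) / 2 := by
        rw [Fin.sum_mul_ite_lt ((card_le_univ T).trans_eq (Fintype.card_fin _))
          (fun i => (i : ℝ) + 1), sum_range_natCast_add_one, hcard]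
        ring

lemma sum_ite_mul_guess_div_sum {X : Type*} [Fintype X] (P : X → Prop) [DecidablePred P] {u : ℝ}
    (hu : 0 ≤ u) :
    (∑ x, if P x then u else 0) *
        guess (fun x => (if P x then u else 0) / ∑ y, if P y then u else 0) =
      u * #{x | P x} * (#{x | P x} + 1) / 2 := by
  have hmass : (∑ x, if P x then u else 0) = #{x | P x} * u := by
    rw [← sum_filter, sum_const, nsmul_eq_mul]
  simp only [hmass, ite_div, zero_div]
  rw [guess_indicator P (by positivity)]
  -- An empty support makes the division junk, but then the mass factor vanishes too.
  rcases eq_or_ne ((#{x | P x} : ℝ) * u) 0 with h | h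
  · rcases mul_eq_zero.mp h with h | h <;> simp [h]
  · field_simp

section Uniform

variable [Fintype Hi] [Fintype Li]

lemma condGuessHL_unif :
    condGuessHL (unif (Hi × Li)) =
      ∑ _ℓ : Li,
        (Fintype.card (Hi × Li) : ℝ)⁻¹ * Fintype.card Hi * (Fintype.card Hi + 1) / 2 := by
  refine sum_congr rfl fun ℓ _ => ?_
  have h := sum_ite_mul_guess_div_sum (fun _ : Hi => True)
    (inv_nonneg.mpr (Nat.cast_nonneg (Fintype.card (Hi × Li))))
  simp only [if_true, filter_true, card_univ] at h
  exact h

lemma condGuessHOL_unif [Fintype Oi] [DecidableEq Oi] (M : Hi × Li → Oi) :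
    condGuessHOL M (unif (Hi × Li)) =
      ∑ ℓ : Li, ∑ o : Oi, (Fintype.card (Hi × Li) : ℝ)⁻¹ * #{h | M (h, ℓ) = o} *
        (#{h | M (h, ℓ) = o} + 1) / 2 :=
  sum_congr rfl fun ℓ _ => sum_congr rfl fun o _ =>
    sum_ite_mul_guess_div_sum (fun h => M (h, ℓ) = o)
      (inv_nonneg.mpr (Nat.cast_nonneg (Fintype.card (Hi × Li))))

end Uniform

theorem GE_unif_eq_general
    [Fintype Hi] [Fintype Li] [Fintype Oi] [DecidableEq Oi] [Nonempty Li]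
    (M : Hi × Li → Oi) :
    GE M (unif (Hi × Li)) =
      (Fintype.card Hi : ℝ) / 2 -
        (1 / (2 * (Fintype.card Hi : ℝ) * (Fintype.card Li : ℝ))) *
          ∑ o : Oi, ∑ ℓ : Li,
            ((Finset.univ.filter fun h : Hi => M (h, ℓ) = o).card : ℝ) ^ 2 := by
  set u : ℝ := (Fintype.card (Hi × Li) : ℝ)⁻¹
  have hfiber (ℓ : Li) : ∑ o : Oi, (#{h | M (h, ℓ) = o} : ℝ) = Fintype.card Hi :=
    mod_cast (card_eq_sum_card_fiberwise fun h _ => mem_univ (M (h, ℓ))).symm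
  have hsplit (ℓ : Li) :
      ∑ o : Oi, u * #{h | M (h, ℓ) = o} * (#{h | M (h, ℓ) = o} + 1) / 2 =
        u / 2 * ∑ o : Oi, (#{h | M (h, ℓ) = o} : ℝ) ^ 2 + u / 2 * Fintype.card Hi := by
    rw [← hfiber ℓ, mul_sum, mul_sum, ← sum_add_distrib]
    exact sum_congr rfl fun o _ => by ring
  rw [GE, condGuessHL_unif, condGuessHOL_unif, sum_congr rfl fun ℓ _ => hsplit ℓ,
    sum_add_distrib, ← mul_sum, sum_comm (s := univ (α := Li))]
  simp only [sum_const, card_univ, nsmul_eq_mul, u, Fintype.card_prod, Nat.cast_mul]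
  rcases eq_or_ne (Fintype.card Hi : ℝ) 0 with hH | hH
  · simp [hH]
  · field_simp
    ring

/-- `GE[U](M) = |ℍ|/2 − (1/(2|ℍ||𝕃|)) Σ_{o,ℓ} |ℍ_{o,ℓ}|²`. -/
theorem GE_unif_eq
    [Fintype Hi] [Fintype Li] [Fintype Oi] [DecidableEq Oi] [Nonempty Hi] [Nonempty Li]
    (M : Hi × Li → Oi) :
    GE M (unif (Hi × Li)) =
      (Fintype.card Hi : ℝ) / 2 -
        (1 / (2 * (Fintype.card Hi : ℝ) * (Fintype.card Li : ℝ))) *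
          ∑ o : Oi, ∑ ℓ : Li,
            ((Finset.univ.filter fun h : Hi => M (h, ℓ) = o).card : ℝ) ^ 2 :=
  GE_unif_eq_general M
end

section
/- Let M : ℍ → 𝕆 and M' : ℍ ∪ {h} → 𝕆 be deterministic programs without low-security inputs such that h ∉ ℍ and M' agrees with M on ℍ (i.e., ⟦M'⟧ = ⟦M⟧ ∪ {(h,o)} for some output o). Then GE[U](M) ≤ GE[U](M'), where each GE[U] is computed with the uniform distribution on the respective input set. -/
lemma sum_fin_ite {n : ℕ} (m : ℕ) (hm : m ≤ n) (c : ℝ) :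
    ∑ j : Fin n, (if (j : ℕ) < m then c else 0) = m * c := by
  rw [Fin.sum_univ_eq_sum_range (fun j => if j < m then c else 0) n]
  rw [← Finset.sum_filter]
  have : Finset.filter (fun j => j < m) (Finset.range n) = Finset.range m := by
    ext j; simp [Nat.lt_of_lt_of_le, and_comm]
    intro hj; exact lt_of_lt_of_le hj hm
  rw [this, Finset.sum_const, Finset.card_range, nsmul_eq_mul]

lemma gauss (k : ℕ) : ∑ j ∈ Finset.range k, ((j : ℝ) + 1) = k * (k + 1) / 2 := by
  induction k with
  | zero => simp
  | succ k ih => rw [Finset.sum_range_succ, ih]; push_cast; ring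

lemma guess_eq {X : Type*} [Fintype X] (p : X → ℝ) (c : ℝ) (hc : 0 < c) (k : ℕ)
    (hp : ∀ x, p x = 0 ∨ p x = c) (hsum : ∑ x, p x = k * c)
    (hk : k ≤ Fintype.card X) :
    guess p = c * k * (k + 1) / 2 := by
  classical
  set n := Fintype.card X with hn
  set e := Fintype.equivFin X with he
  set f : Fin n → ℝ := fun j => -p (e.symm j) with hf
  set σ := Tuple.sort f with hσ
  set q : Fin n → ℝ := fun i => p (e.symm (σ i)) with hq
  have hmono : Monotone (f ∘ σ) := Tuple.monotone_sort f
  have hqanti : Antitone q := by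
    intro i j hij
    have := hmono hij
    simp only [Function.comp_apply, hf] at this
    simp only [hq]
    linarith
  have hq01 : ∀ i, q i = 0 ∨ q i = c := fun i => hp _
  have hqnonneg : ∀ i, 0 ≤ q i := by
    intro i; rcases hq01 i with h | h <;> rw [h] <;> positivity
  have hqle : ∀ i, q i ≤ c := by
    intro i; rcases hq01 i with h | h <;> simp [h, hc.le]
  have hqsum : ∑ i, q i = k * c := by
    rw [← hsum]
    exact Equiv.sum_comp ((σ : Equiv.Perm (Fin n)).trans e.symm) p
  have hkey : ∀ i : Fin n, q i = if (i : ℕ) < k then c else 0 := by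
    intro i
    by_cases h : (i : ℕ) < k
    · simp only [h, if_true]
      rcases hq01 i with h0 | h0
      · exfalso
        have hub : ∑ j, q j ≤ ∑ j : Fin n, (if (j : ℕ) < (i : ℕ) then c else 0) := by
          apply Finset.sum_le_sum
          intro j _
          by_cases hj : (j : ℕ) < (i : ℕ)
          · simp [hj, hqle j]
          · simp only [hj, if_false]
            have : i ≤ j := by
              have := Nat.le_of_not_lt hj
              exact Fin.le_def.mpr this
            have := hqanti this
            rw [h0] at this
            linarith [hqnonneg j]
        rw [hqsum, sum_fin_ite (i : ℕ) i.isLt.le c] at hub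
        have : (k : ℝ) ≤ (i : ℕ) := by
          have hcpos := hc
          nlinarith
        have : k ≤ (i : ℕ) := by exact_mod_cast this
        omega
      · exact h0
    · simp only [h, if_false]
      rcases hq01 i with h0 | h0
      · exact h0
      · exfalso
        have hlb : ∑ j : Fin n, (if (j : ℕ) < (i : ℕ) + 1 then c else 0) ≤ ∑ j, q j := by
          apply Finset.sum_le_sum
          intro j _
          by_cases hj : (j : ℕ) < (i : ℕ) + 1
          · simp only [hj, if_true]
            have : j ≤ i := Fin.le_def.mpr (Nat.lt_succ_iff.mp hj)
            have := hqanti this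
            rw [h0] at this
            exact this
          · simp [hj, hqnonneg j]
        rw [hqsum, sum_fin_ite ((i : ℕ) + 1) i.isLt c] at hlb
        have : ((i : ℕ) : ℝ) + 1 ≤ k := by push_cast at hlb ⊢; nlinarith
        have : (i : ℕ) + 1 ≤ k := by exact_mod_cast this
        omega
  have : guess p = ∑ i : Fin n, ((i : ℕ) + 1 : ℝ) * q i := rfl
  rw [this]
  have : ∀ i : Fin n, ((i : ℕ) + 1 : ℝ) * q i =
      (if (i : ℕ) < k then ((i : ℕ) + 1 : ℝ) * c else 0) := by
    intro i; rw [hkey i]; split <;> simp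
  rw [Finset.sum_congr rfl (fun i _ => this i)]
  rw [Fin.sum_univ_eq_sum_range (fun i => if i < k then ((i : ℕ) + 1 : ℝ) * c else 0) n]
  rw [← Finset.sum_filter]
  have hfil : Finset.filter (fun j => j < k) (Finset.range n) = Finset.range k := by
    ext j; simp [and_comm]
    intro hj; exact lt_of_lt_of_le hj hk
  rw [hfil, ← Finset.sum_mul, gauss]
  ring

variable {Hi Oi : Type*}

/-- Probability `μ(O = o)` where `O = M(H)` (no low-security inputs). -/
noncomputable def pO [Fintype Hi] [DecidableEq Oi] (M : Hi → Oi) (μ : Hi → ℝ) (o : Oi) :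
    ℝ := ∑ h, if M h = o then μ h else 0

/-- Conditional guessing entropy `𝓖[μ](H|O)` where `O = M(H)`. -/
noncomputable def condGuessHO [Fintype Hi] [Fintype Oi] [DecidableEq Oi]
    (M : Hi → Oi) (μ : Hi → ℝ) : ℝ :=
  ∑ o : Oi, pO M μ o * guess (fun h : Hi => (if M h = o then μ h else 0) / pO M μ o)

/-- Guessing-entropy-based QIF for programs without low-security inputs:
`GE[μ](M) = 𝓖[μ](H) − 𝓖[μ](H|O)`. -/
noncomputable def GE0 [Fintype Hi] [Fintype Oi] [DecidableEq Oi]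
    (M : Hi → Oi) (μ : Hi → ℝ) : ℝ :=
  guess μ - condGuessHO M μ

/-- fiber count -/
def fib [Fintype Hi] [DecidableEq Oi] (M : Hi → Oi) (o : Oi) : ℕ :=
  (Finset.univ.filter (fun h => M h = o)).card

lemma pO_unif_eq [Fintype Hi] [DecidableEq Oi] (M : Hi → Oi) (o : Oi) :
    pO M (unif Hi) o = (fib M o : ℝ) / (Fintype.card Hi : ℝ) := by
  unfold pO unif fib
  rw [← Finset.sum_filter, Finset.sum_const, nsmul_eq_mul]
  rw [div_eq_mul_inv]

lemma fib_le [Fintype Hi] [DecidableEq Oi] (M : Hi → Oi) (o : Oi) :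
    fib M o ≤ Fintype.card Hi :=
  (Finset.card_filter_le _ _).trans (le_of_eq (Finset.card_univ))

lemma sum_fib [Fintype Hi] [Fintype Oi] [DecidableEq Oi] (M : Hi → Oi) :
    ∑ o : Oi, fib M o = Fintype.card Hi := by
  unfold fib
  rw [← Finset.card_univ]
  exact (Finset.card_eq_sum_card_fiberwise (fun h _ => Finset.mem_univ (M h))).symm

lemma GE0_unif_eq [Fintype Hi] [Fintype Oi] [DecidableEq Oi] [Nonempty Hi]
    (M : Hi → Oi) :
    GE0 M (unif Hi) =
      ((Fintype.card Hi : ℝ) ^ 2 - ∑ o : Oi, (fib M o : ℝ) ^ 2) /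
        (2 * (Fintype.card Hi : ℝ)) := by
  have hn : 0 < Fintype.card Hi := Fintype.card_pos
  have hnR : (0 : ℝ) < (Fintype.card Hi : ℝ) := by exact_mod_cast hn
  set n : ℕ := Fintype.card Hi with hdefn
  -- guess of uniform
  have hguess : guess (unif Hi) = ((n : ℝ))⁻¹ * n * (n + 1) / 2 := by
    apply guess_eq (unif Hi) ((n : ℝ))⁻¹ (by positivity) n
    · intro x; right; rfl
    · simp only [unif, Finset.sum_const, Finset.card_univ, nsmul_eq_mul, ← hdefn]
    · exact le_rfl
  -- conditional guessing entropy
  have hcond : condGuessHO M (unif Hi) =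
      ∑ o : Oi, (fib M o : ℝ) * ((fib M o : ℝ) + 1) / (2 * n) := by
    unfold condGuessHO
    apply Finset.sum_congr rfl
    intro o _
    by_cases hko : fib M o = 0
    · rw [pO_unif_eq, hko]
      simp
    · have hkpos : 0 < fib M o := Nat.pos_of_ne_zero hko
      have hkR : (0 : ℝ) < (fib M o : ℝ) := by exact_mod_cast hkpos
      have hpO : pO M (unif Hi) o = (fib M o : ℝ) / n := pO_unif_eq M o
      have hg : guess (fun h : Hi => (if M h = o then unif Hi h else 0) / pO M (unif Hi) o)
          = ((fib M o : ℝ))⁻¹ * (fib M o) * ((fib M o) + 1) / 2 := by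
        apply guess_eq _ ((fib M o : ℝ))⁻¹ (by positivity) (fib M o)
        · intro x
          by_cases hx : M x = o
          · right
            rw [hpO]
            simp only [hx, if_true, unif]
            rw [← hdefn]
            field_simp
          · left; simp [hx]
        · rw [← Finset.sum_div, ← pO]
          rw [hpO]
          field_simp
        · exact fib_le M o
      rw [hg, hpO]
      field_simp
  unfold GE0
  rw [hguess, hcond]
  have hsum2 : ∑ o : Oi, (fib M o : ℝ) * ((fib M o : ℝ) + 1) / (2 * n)
      = ((∑ o : Oi, (fib M o : ℝ) ^ 2) + n) / (2 * n) := by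
    rw [← Finset.sum_div]
    congr 1
    have : ∑ o : Oi, (fib M o : ℝ) * ((fib M o : ℝ) + 1)
        = (∑ o : Oi, (fib M o : ℝ) ^ 2) + ∑ o : Oi, (fib M o : ℝ) := by
      rw [← Finset.sum_add_distrib]
      apply Finset.sum_congr rfl; intro o _; ring
    rw [this]
    congr 1
    rw [← Nat.cast_sum, sum_fib]
  rw [hsum2]
  field_simp
  ring

lemma fib_option [Fintype Hi] [DecidableEq Oi] (M : Hi → Oi) (M' : Option Hi → Oi)
    (hagree : ∀ h : Hi, M' (some h) = M h) (o : Oi) :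
    fib M' o = fib M o + (if M' none = o then 1 else 0) := by
  unfold fib
  rw [Finset.card_filter, Finset.card_filter]
  rw [Fintype.sum_option]
  have : ∀ h : Hi, (if M' (some h) = o then 1 else 0) = (if M h = o then 1 else 0) := by
    intro h; rw [hagree]
  rw [Finset.sum_congr rfl (fun h _ => this h)]
  ring


/-- If `M'` extends `M` by one extra high-security input (`⟦M'⟧ = ⟦M⟧ ∪ {(h,o)}`
with `h ∉ ℍ`), then `GE[U](M) ≤ GE[U](M')`. -/
theorem GE0_mono_extend
    [Fintype Hi] [Fintype Oi] [DecidableEq Oi] [Nonempty Hi]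
    (M : Hi → Oi) (M' : Option Hi → Oi)
    (hagree : ∀ h : Hi, M' (some h) = M h) :
    GE0 M (unif Hi) ≤ GE0 M' (unif (Option Hi)) := by
  rw [GE0_unif_eq M, GE0_unif_eq M']
  set n : ℕ := Fintype.card Hi with hdefn
  have hn : 0 < n := Fintype.card_pos
  have hnR : (0 : ℝ) < (n : ℝ) := by exact_mod_cast hn
  have hcardO : Fintype.card (Option Hi) = n + 1 := Fintype.card_option
  set S : ℝ := ∑ o : Oi, (fib M o : ℝ) ^ 2 with hdefS
  set K : ℝ := (fib M (M' none) : ℝ) with hdefK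
  have hS' : ∑ o : Oi, (fib M' o : ℝ) ^ 2 = S + 2 * K + 1 := by
    have h1 : ∀ o : Oi, (fib M' o : ℝ) ^ 2 =
        (fib M o : ℝ) ^ 2 +
          2 * ((if M' none = o then (fib M o : ℝ) else 0)) +
          (if M' none = o then (1 : ℝ) else 0) := by
      intro o
      rw [fib_option M M' hagree o]
      push_cast [apply_ite (Nat.cast : ℕ → ℝ)]
      split <;> ring
    rw [Finset.sum_congr rfl (fun o _ => h1 o)]
    rw [Finset.sum_add_distrib, Finset.sum_add_distrib, ← Finset.mul_sum]
    rw [Finset.sum_ite_eq, Finset.sum_ite_eq]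
    simp [hdefS, hdefK]
  rw [hS', hcardO]
  have hKle : K ≤ n := by
    rw [hdefK]; exact_mod_cast fib_le M (M' none)
  have hKnn : 0 ≤ K := by rw [hdefK]; positivity
  have hSK : K ^ 2 ≤ S := by
    rw [hdefS, hdefK]
    exact Finset.single_le_sum (f := fun o => (fib M o : ℝ) ^ 2)
      (fun o _ => by positivity) (Finset.mem_univ (M' none))
  rw [div_le_div_iff₀ (by positivity) (by positivity)]
  push_cast
  nlinarith [sq_nonneg ((n : ℝ) - K)]
end
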